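/- Let X and Y be compact Hausdorff spaces. Let Lsc_b(X, Lsc_b(Y)^{++}) be the partially ordered abelian semigroup (pointwise order and addition) of maps f : X → Lsc_b(Y)^{++} such that {x ∈ X : g ≪ f(x)} is open for every g ∈ Lsc_b(Y)^{++} and sup_{x∈X, y∈Y} f(x)(y) < ∞. Let G_b(X,Y) = {F : X × Y → ℝ : F = G − H with G, H bounded strictly positive lower semicontinuous functions on X × Y}, a partially ordered abelian group under pointwise order. Then the map β from the Grothendieck group G(Lsc_b(X, Lsc_b(Y)^{++})) to G_b(X,Y) defined by β([f] − [g]) = f̃ − g̃, where f̃(x,y) = f(x)(y), is a well-defined injective group homomorphism which is an order-embedding (β(s) ≤ β(t) if and only if s ≤ t). -/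

import Mathlib

noncomputable section

set_option maxHeartbeats 1000000

/-- `a` is compactly contained in `b`: for every increasing sequence having a supremum
which dominates `b`, some term already dominates `a`. -/
def CompactlyContained {M : Type*} [Preorder M] (a b : M) : Prop :=
  ∀ c : ℕ → M, Monotone c → ∀ s : M, IsLUB (Set.range c) s → b ≤ s → ∃ n, a ≤ c n

/-- The Riesz interpolation property. -/
def RieszInterpolation (M : Type*) [Preorder M] : Prop :=
  ∀ a₁ a₂ b₁ b₂ : M, a₁ ≤ b₁ → a₁ ≤ b₂ → a₂ ≤ b₁ → a₂ ≤ b₂ →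
    ∃ c : M, a₁ ≤ c ∧ a₂ ≤ c ∧ c ≤ b₁ ∧ c ≤ b₂

/-- The partially ordered abelian semigroup `Lsc_b(Y)^{++}` of bounded, strictly
positive, lower semicontinuous real functions on `Y`, with pointwise order. -/
def Lscb (Y : Type*) [TopologicalSpace Y] : Type _ :=
  {g : Y → ℝ // LowerSemicontinuous g ∧ (∀ y, 0 < g y) ∧ ∃ C : ℝ, ∀ y, g y ≤ C}

instance (Y : Type*) [TopologicalSpace Y] : PartialOrder (Lscb Y) :=
  Subtype.partialOrder _

instance (Y : Type*) [TopologicalSpace Y] : Add (Lscb Y) where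
  add g h :=
    ⟨fun y => g.1 y + h.1 y, g.2.1.add h.2.1,
      fun y => add_pos (g.2.2.1 y) (h.2.2.1 y),
      g.2.2.2.elim fun C hC => h.2.2.2.elim fun D hD =>
        ⟨C + D, fun y => add_le_add (hC y) (hD y)⟩⟩

variable {X Y : Type*} [TopologicalSpace X] [TopologicalSpace Y]

/-- Membership in the semigroup `Lsc_b(X, Lsc_b(Y)^{++})`: lower semicontinuity as a
map into `Lsc_b(Y)^{++}` together with a uniform bound. -/
def MemLscbXY (f : X → Lscb Y) : Prop :=
  (∀ g : Lscb Y, IsOpen {x : X | CompactlyContained g (f x)}) ∧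
    ∃ C : ℝ, ∀ (x : X) (y : Y), (f x).1 y ≤ C

/-- The Grothendieck relation: `(f, g)` and `(f', g')` represent the same formal
difference iff `f + g' + e = f' + g + e` for some `e` in the semigroup. -/
def GrotRel (f g f' g' : X → Lscb Y) : Prop :=
  ∃ e : X → Lscb Y, MemLscbXY e ∧ f + g' + e = f' + g + e

/-- The map `β` on representatives: `β(f, g) = f̃ - g̃`. -/
def betaMap (f g : X → Lscb Y) : X × Y → ℝ :=
  fun p => (f p.1).1 p.2 - (g p.1).1 p.2

/-- Membership in `G_b(X, Y)`: differences of bounded strictly positive lower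
semicontinuous functions on `X × Y`. -/
def MemGb (F : X × Y → ℝ) : Prop :=
  ∃ G H : X × Y → ℝ,
    (LowerSemicontinuous G ∧ (∀ p, 0 < G p) ∧ ∃ C : ℝ, ∀ p, G p ≤ C) ∧
    (LowerSemicontinuous H ∧ (∀ p, 0 < H p) ∧ ∃ C : ℝ, ∀ p, H p ≤ C) ∧
    F = G - H

/-!
The algebraic parts reduce to cancellation in `ℝ`, pointwise on `X × Y`. The substance is
that `f̃ (x, y) = f x y` is lower semicontinuous on `X × Y`. Given `t < f x₀ y₀`, Urysohn's
lemma yields a continuous `g ∈ Lsc_b(Y)^{++}` with `g < f x₀` pointwise and `t < g y₀`; by a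
Dini-type compactness argument `g ≪ f x₀`, so `{x | g ≪ f x} ×ˢ {y | t < g y}` is an open
neighbourhood of `(x₀, y₀)` on which `t < f̃`.
-/

open Set Filter Topology

theorem CompactlyContained.le {M : Type*} [Preorder M] {a b : M}
    (h : CompactlyContained a b) : a ≤ b := by
  obtain ⟨n, hn⟩ := h (fun _ => b) monotone_const b (by rw [range_const]; exact isLUB_singleton)
    le_rfl
  exact hn

namespace Lscb

variable {Y : Type*} [TopologicalSpace Y]

theorem le_def {a b : Lscb Y} : a ≤ b ↔ ∀ y, a.1 y ≤ b.1 y := Iff.rfl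

theorem add_apply (a b : Lscb Y) (y : Y) : (a + b).1 y = a.1 y + b.1 y := rfl

theorem exists_pos_le [CompactSpace Y] (h : Lscb Y) : ∃ m, 0 < m ∧ ∀ y, m ≤ h.1 y := by
  rcases isEmpty_or_nonempty Y with hY | ⟨⟨y₀⟩⟩
  · exact ⟨1, one_pos, fun y => isEmptyElim y⟩
  · obtain ⟨a, -, ha⟩ :=
      (h.2.1.lowerSemicontinuousOn univ).exists_isMinOn ⟨y₀, mem_univ _⟩ isCompact_univ
    exact ⟨h.1 a, h.2.2.1 a, fun y => ha (mem_univ y)⟩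

theorem le_ciSup_of_isLUB {ι : Type*} [Nonempty ι] {c : ι → Lscb Y} {s : Lscb Y}
    (hs : IsLUB (range c) s) (y : Y) : s.1 y ≤ ⨆ i, (c i).1 y := by
  have hbdd : ∀ y, BddAbove (range fun i => (c i).1 y) := fun y =>
    ⟨s.1 y, by rintro _ ⟨i, rfl⟩; exact hs.1 ⟨i, rfl⟩ y⟩
  obtain ⟨C, hC⟩ := s.2.2.2
  let S : Lscb Y :=
    ⟨fun y => ⨆ i, (c i).1 y, lowerSemicontinuous_ciSup hbdd fun i => (c i).2.1,
      fun y => ((c (Classical.arbitrary ι)).2.2.1 y).trans_le (le_ciSup (hbdd y) _),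
      ⟨C, fun y => ciSup_le fun i => (hs.1 ⟨i, rfl⟩ y).trans (hC y)⟩⟩
  exact hs.2 (show S ∈ upperBounds (range c) by
    rintro _ ⟨i, rfl⟩; exact fun y => le_ciSup (hbdd y) i) y

theorem compactlyContained_of_continuous_of_lt [CompactSpace Y] {g h : Lscb Y}
    (hg : Continuous g.1) (hgh : ∀ y, g.1 y < h.1 y) : CompactlyContained g h := by
  intro c hc s hs hhs
  have hopen : ∀ n, IsOpen {y | g.1 y < (c n).1 y} := fun n => by
    convert ((c n).2.1.add hg.neg.lowerSemicontinuous).isOpen_preimage 0 using 1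
    ext y
    simp [← sub_eq_add_neg]
  have hcover : univ ⊆ ⋃ n, {y | g.1 y < (c n).1 y} := fun y _ =>
    mem_iUnion.2 <| exists_lt_of_lt_ciSup <|
      (hgh y).trans_le ((hhs y).trans (le_ciSup_of_isLUB hs y))
  have hdir : Directed (· ⊆ ·) fun n => {y | g.1 y < (c n).1 y} :=
    Monotone.directed_le fun m n hmn y hy => hy.trans_le (hc hmn y)
  obtain ⟨n, hn⟩ := isCompact_univ.elim_directed_cover _ hopen hcover hdir
  exact ⟨n, fun y => (hn (mem_univ y)).le⟩

theorem exists_compactlyContained_lt [CompactSpace Y] [T2Space Y] (h : Lscb Y) {t : ℝ} {y₀ : Y}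
    (ht : t < h.1 y₀) : ∃ g : Lscb Y, CompactlyContained g h ∧ t < g.1 y₀ := by
  obtain ⟨m, hm, hmh⟩ := h.exists_pos_le
  obtain ⟨s, hts, hs, hsh⟩ : ∃ s, t ≤ s ∧ 0 ≤ s ∧ s < h.1 y₀ :=
    ⟨max t 0, le_max_left _ _, le_max_right _ _, max_lt ht (h.2.2.1 y₀)⟩
  obtain ⟨δ, hδ, hδm, hδs⟩ : ∃ δ, 0 < δ ∧ δ < m ∧ s + δ < h.1 y₀ := by
    have hpos := lt_min hm (sub_pos.2 hsh)
    refine ⟨_, half_pos hpos, (half_lt_self hpos).trans_le (min_le_left _ _), ?_⟩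
    linarith [(half_lt_self hpos).trans_le (min_le_right _ _)]
  obtain ⟨φ, hφ_zero, hφ_one, hφ⟩ := exists_continuous_zero_one_of_isClosed
    (h.2.1.isOpen_preimage (s + δ)).isClosed_compl isClosed_singleton
    (disjoint_singleton_right.2 (not_not_intro hδs))
  have hsφ : ∀ y, 0 ≤ s * φ y ∧ s * φ y ≤ s := fun y =>
    ⟨mul_nonneg hs (hφ y).1, mul_le_of_le_one_right hs (hφ y).2⟩
  -- `g = δ + s φ` is at most `s + δ < h` on `{h > s + δ}` and equals `δ < m ≤ h` off it.
  have hgc : Continuous fun y => δ + s * φ y := by fun_prop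
  let g : Lscb Y := ⟨fun y => δ + s * φ y, hgc.lowerSemicontinuous,
    fun y => by linarith [hsφ y], ⟨δ + s, fun y => by linarith [hsφ y]⟩⟩
  refine ⟨g, compactlyContained_of_continuous_of_lt hgc fun y => ?_, ?_⟩
  · show δ + s * φ y < h.1 y
    by_cases hy : s + δ < h.1 y
    · linarith [hsφ y]
    · rw [hφ_zero hy, Pi.zero_apply, mul_zero, add_zero]
      exact hδm.trans_le (hmh y)
  · show t < δ + s * φ y₀
    rw [hφ_one rfl, Pi.one_apply, mul_one]
    linarith

end Lscb

section Topology

variable {X Y : Type*} [TopologicalSpace X] [TopologicalSpace Y]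

theorem MemLscbXY.lowerSemicontinuous_uncurry [CompactSpace Y] [T2Space Y] {f : X → Lscb Y}
    (hf : MemLscbXY f) : LowerSemicontinuous fun p : X × Y => (f p.1).1 p.2 := by
  rintro ⟨x₀, y₀⟩ t ht
  obtain ⟨g, hgf, htg⟩ := (f x₀).exists_compactlyContained_lt ht
  have hnhds : {x | CompactlyContained g (f x)} ×ˢ {y | t < g.1 y} ∈ 𝓝 (x₀, y₀) :=
    ((hf.1 g).prod (g.2.1.isOpen_preimage t)).mem_nhds ⟨hgf, htg⟩
  filter_upwards [hnhds] with p hp using hp.2.trans_le (hp.1.le p.2)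

theorem memGb_betaMap [CompactSpace Y] [T2Space Y] {f g : X → Lscb Y} (hf : MemLscbXY f)
    (hg : MemLscbXY g) : MemGb (betaMap f g) := by
  have key : ∀ {f : X → Lscb Y}, MemLscbXY f →
      LowerSemicontinuous (fun p : X × Y => (f p.1).1 p.2) ∧ (∀ p : X × Y, 0 < (f p.1).1 p.2) ∧
        ∃ C, ∀ p : X × Y, (f p.1).1 p.2 ≤ C := fun {f} hf =>
    ⟨hf.lowerSemicontinuous_uncurry, fun p => (f p.1).2.2.1 p.2,
      hf.2.imp fun _ hC p => hC p.1 p.2⟩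
  exact ⟨_, _, key hf, key hg, rfl⟩

end Topology

section Algebra

variable {X Y : Type*} [TopologicalSpace Y]

theorem betaMap_add (f g f' g' : X → Lscb Y) :
    betaMap (f + f') (g + g') = betaMap f g + betaMap f' g' := by
  funext p
  simp only [betaMap, Pi.add_apply, Lscb.add_apply]
  ring

theorem betaMap_le_betaMap_iff (f g f' g' e : X → Lscb Y) :
    betaMap f g ≤ betaMap f' g' ↔ f + g' + e ≤ f' + g + e := by
  simp only [Pi.le_def, Prod.forall, betaMap, Lscb.le_def, Pi.add_apply, Lscb.add_apply]
  exact forall₂_congr fun x y => by constructor <;> intro h <;> linarith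

theorem betaMap_eq_betaMap_iff (f g f' g' e : X → Lscb Y) :
    betaMap f g = betaMap f' g' ↔ f + g' + e = f' + g + e := by
  rw [le_antisymm_iff, le_antisymm_iff, betaMap_le_betaMap_iff f g f' g' e,
    betaMap_le_betaMap_iff f' g' f g e]

end Algebra

theorem stmt16_general (X Y : Type*) [TopologicalSpace X]
    [TopologicalSpace Y] [CompactSpace Y] [T2Space Y] :
    -- `β` is well defined
    (∀ f g f' g' : X → Lscb Y, MemLscbXY f → MemLscbXY g → MemLscbXY f' → MemLscbXY g' →
      GrotRel f g f' g' → betaMap f g = betaMap f' g') ∧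
    -- `β` takes values in `G_b(X, Y)`
    (∀ f g : X → Lscb Y, MemLscbXY f → MemLscbXY g → MemGb (betaMap f g)) ∧
    -- `β` is additive, i.e. a group homomorphism
    (∀ f g f' g' : X → Lscb Y, MemLscbXY f → MemLscbXY g → MemLscbXY f' → MemLscbXY g' →
      betaMap (f + f') (g + g') = betaMap f g + betaMap f' g') ∧
    -- `β` is injective
    (∀ f g f' g' : X → Lscb Y, MemLscbXY f → MemLscbXY g → MemLscbXY f' → MemLscbXY g' →
      betaMap f g = betaMap f' g' → GrotRel f g f' g') ∧
    -- `β` is an order-embedding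
    (∀ f g f' g' : X → Lscb Y, MemLscbXY f → MemLscbXY g → MemLscbXY f' → MemLscbXY g' →
      ((∃ e : X → Lscb Y, MemLscbXY e ∧ f + g' + e ≤ f' + g + e) ↔
        betaMap f g ≤ betaMap f' g')) := by
  refine ⟨?_, fun f g hf hg => memGb_betaMap hf hg, fun f g f' g' _ _ _ _ => betaMap_add f g f' g',
    ?_, ?_⟩
  · rintro f g f' g' - - - - ⟨e, -, he⟩
    exact (betaMap_eq_betaMap_iff f g f' g' e).2 he
  · rintro f g f' g' hf - - - h
    exact ⟨f, hf, (betaMap_eq_betaMap_iff f g f' g' f).1 h⟩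
  · rintro f g f' g' hf - - -
    exact ⟨fun ⟨e, _, he⟩ => (betaMap_le_betaMap_iff f g f' g' e).2 he,
      fun h => ⟨f, hf, (betaMap_le_betaMap_iff f g f' g' f).1 h⟩⟩

theorem stmt16 (X Y : Type*) [TopologicalSpace X] [CompactSpace X] [T2Space X]
    [TopologicalSpace Y] [CompactSpace Y] [T2Space Y] :
    -- `β` is well defined
    (∀ f g f' g' : X → Lscb Y, MemLscbXY f → MemLscbXY g → MemLscbXY f' → MemLscbXY g' →
      GrotRel f g f' g' → betaMap f g = betaMap f' g') ∧
    -- `β` takes values in `G_b(X, Y)`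
    (∀ f g : X → Lscb Y, MemLscbXY f → MemLscbXY g → MemGb (betaMap f g)) ∧
    -- `β` is additive, i.e. a group homomorphism
    (∀ f g f' g' : X → Lscb Y, MemLscbXY f → MemLscbXY g → MemLscbXY f' → MemLscbXY g' →
      betaMap (f + f') (g + g') = betaMap f g + betaMap f' g') ∧
    -- `β` is injective
    (∀ f g f' g' : X → Lscb Y, MemLscbXY f → MemLscbXY g → MemLscbXY f' → MemLscbXY g' →
      betaMap f g = betaMap f' g' → GrotRel f g f' g') ∧
    -- `β` is an order-embedding
    (∀ f g f' g' : X → Lscb Y, MemLscbXY f → MemLscbXY g → MemLscbXY f' → MemLscbXY g' →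
      ((∃ e : X → Lscb Y, MemLscbXY e ∧ f + g' + e ≤ f' + g + e) ↔
        betaMap f g ≤ betaMap f' g')) :=
  stmt16_general X Y
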